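/- Let (β_i)_{i≥0} be a sequence in K \ {0} (char K = 0) with β_0 = 1, β_1 = 1/2, satisfying: (a) β_{i+1} = 2 − β_i for all odd i, and (b) there exists a constant r with 1/β_{2m} + 1/β_{2m+1} = r for all m ≥ 0. Then r = 3 and β_i = α_i for all i, where (α_i) is the Veronese sequence. -/

import Mathlib

/-- The Veronese sequence over a field `K` of characteristic zero: `α 0 = 1`,
`α (i+1) = 2 - α i` for `i` odd, and `α (i+1) = α i / (3 α i - 1)` for `i` even. -/
def veronese (K : Type*) [Field K] : ℕ → K
  | 0 => 1
  | (i + 1) =>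
      if Odd i then 2 - veronese K i else veronese K i / (3 * veronese K i - 1)

theorem veronese_succ_of_odd {K : Type*} [Field K] {i : ℕ} (hi : Odd i) :
    veronese K (i + 1) = 2 - veronese K i := by
  simp [veronese, hi]

theorem veronese_succ_of_even {K : Type*} [Field K] {i : ℕ} (hi : Even i) :
    veronese K (i + 1) = veronese K i / (3 * veronese K i - 1) := by
  simp [veronese, Nat.not_odd_iff_even.mpr hi]

theorem eq_veronese_of_recurrence {K : Type*} [Field K] (β : ℕ → K) (h0 : β 0 = 1)
    (hodd : ∀ i, Odd i → β (i + 1) = 2 - β i)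
    (heven : ∀ i, Even i → β (i + 1) = β i / (3 * β i - 1)) (i : ℕ) :
    β i = veronese K i := by
  induction i with
  | zero => simpa [veronese] using h0
  | succ i ih =>
    rcases Nat.even_or_odd i with hi | hi
    · rw [heven i hi, veronese_succ_of_even hi, ih]
    · rw [hodd i hi, veronese_succ_of_odd hi, ih]

theorem eq_div_of_one_div_add_one_div_eq_three {K : Type*} [Field K] {b c : K}
    (hb : b ≠ 0) (hc : c ≠ 0) (h : 1 / b + 1 / c = 3) : c = b / (3 * b - 1) := by
  field_simp at h
  -- Cleared of denominators, `h` says `b = c * (3 * b - 1)`.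
  have hden : 3 * b - 1 ≠ 0 := by
    intro hz
    exact hb (by linear_combination h + c * hz)
  rw [eq_div_iff hden]
  linear_combination -h

theorem veronese_characterization_general {K : Type*} [Field K]
    (β : ℕ → K) (hne : ∀ i, β i ≠ 0)
    (h0 : β 0 = 1) (h1 : β 1 = 1 / 2)
    (hodd : ∀ i, Odd i → β (i + 1) = 2 - β i)
    (r : K) (hr : ∀ m : ℕ, 1 / β (2 * m) + 1 / β (2 * m + 1) = r) :
    r = 3 ∧ ∀ i, β i = veronese K i := by
  have hr3 : r = 3 := by
    rw [← hr 0, h0, h1, one_div_one_div]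
    norm_num
  refine ⟨hr3, eq_veronese_of_recurrence β h0 hodd fun i hi => ?_⟩
  obtain ⟨m, rfl⟩ := hi.two_dvd
  exact eq_div_of_one_div_add_one_div_eq_three (hne _) (hne _) (hr3 ▸ hr m)

/-- Let `(β i)` be a sequence of nonzero elements of a field of characteristic `0` with
`β 0 = 1`, `β 1 = 1/2`, satisfying `β (i+1) = 2 - β i` for odd `i`, and such that
`1/β (2m) + 1/β (2m+1) = r` for a constant `r` independent of `m`.  Then `r = 3` and
`β` is the Veronese sequence. -/
theorem veronese_characterization {K : Type*} [Field K] [CharZero K]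
    (β : ℕ → K) (hne : ∀ i, β i ≠ 0)
    (h0 : β 0 = 1) (h1 : β 1 = 1 / 2)
    (hodd : ∀ i, Odd i → β (i + 1) = 2 - β i)
    (r : K) (hr : ∀ m : ℕ, 1 / β (2 * m) + 1 / β (2 * m + 1) = r) :
    r = 3 ∧ ∀ i, β i = veronese K i :=
  veronese_characterization_general β hne h0 h1 hodd r hr
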